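/- arXiv:2506.22573 — 2 statements merged into one kernel-verified Lean document; each statement's English description precedes it below -/
import Mathlib

section
/- Let A be a Noetherian integrally closed domain with fraction field K, and let B be a finitely generated torsion-free A-module of rank 1, i.e. dim_K(K ⊗_A B) = 1. For n ≥ 0 set B^{[n]} := (B^{⊗n})^∨∨ (tensor powers over A). Then for all m, n ≥ 0 the natural map B^{[n]} ⊗_A B^{[m]} → B^{[n+m]} (induced by double dualization from the identification B^{⊗n} ⊗_A B^{⊗m} = B^{⊗(n+m)}) induces an isomorphism (B^{[n]} ⊗_A B^{[m]})^∨∨ ≅ B^{[n+m]}. -/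
/-!
Since `K ⊗ B` is a line and `B` is torsion-free, some `b₀ : B` spans `B` generically: `B / A b₀`
is torsion. The same then holds for the tensor powers of `B` (with generator `b₀ ⊗ ⋯ ⊗ b₀`).
If `x₀` spans `M` generically, every functional on `M` is determined by its value at `x₀`, so
`M → M^∨∨` has torsion cokernel; dualizing, `M^∨∨∨ → M^∨` is bijective and `M^∨` is reflexive.
For `X = B^{⊗n}` and `Y = B^{⊗m}`, the dual of `X^∨∨ ⊗ Y^∨∨ → (X ⊗ Y)^∨∨` is then bijective,
because precomposing it with the injective dual of `X ⊗ Y → X^∨∨ ⊗ Y^∨∨` gives the bijective dual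
of `X ⊗ Y → (X ⊗ Y)^∨∨`. Finally, a map into a reflexive module whose dual is bijective induces an
isomorphism from the reflexive hull of its source.
-/

open TensorProduct Module

/-- The canonical map `X^∨∨ ⊗_A Y^∨∨ → (X ⊗_A Y)^∨∨`, sending `F ⊗ G` to the functional
`φ ↦ F (x ↦ G (y ↦ φ (x ⊗ y)))`.  On images of the evaluation maps it sends
`eval x ⊗ eval y` to `eval (x ⊗ y)`. -/
noncomputable def doubleDualTensor (A X Y : Type*) [CommRing A]
    [AddCommGroup X] [Module A X] [AddCommGroup Y] [Module A Y] :
    (Module.Dual A (Module.Dual A X)) ⊗[A] (Module.Dual A (Module.Dual A Y)) →ₗ[A]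
      Module.Dual A (Module.Dual A (X ⊗[A] Y)) :=
  TensorProduct.lift
    ((((LinearMap.llcomp A (Module.Dual A (X ⊗[A] Y)) (Module.Dual A X) A).flip).comp
        ((LinearMap.lcomp A (Module.Dual A X) (TensorProduct.lcurry (RingHom.id A) X Y A)).comp
          (LinearMap.llcomp A X (Module.Dual A Y) A))).flip)

section

variable {A : Type*} [CommRing A] {M N P Q : Type*} [AddCommMonoid M] [Module A M]
  [AddCommMonoid N] [Module A N] [AddCommMonoid P] [Module A P] [AddCommMonoid Q] [Module A Q]

def LinearMap.HasTorsionCokernel (f : M →ₗ[A] N) : Prop :=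
  ∀ y : N, ∃ a : A, a ≠ 0 ∧ a • y ∈ range f

namespace LinearMap.HasTorsionCokernel

theorem comp_of_surjective {f : M →ₗ[A] N} {g : N →ₗ[A] P} (hf : f.HasTorsionCokernel)
    (hg : Function.Surjective g) : (g ∘ₗ f).HasTorsionCokernel := by
  intro z
  obtain ⟨y, rfl⟩ := hg z
  obtain ⟨a, ha, x, hx⟩ := hf y
  exact ⟨a, ha, x, by rw [comp_apply, hx, map_smul]⟩

variable [IsDomain A]

theorem injective_dualMap {f : M →ₗ[A] N} (hf : f.HasTorsionCokernel) :
    Function.Injective f.dualMap := by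
  rw [← ker_eq_bot, ker_eq_bot']
  intro φ hφ
  ext y
  obtain ⟨a, ha, x, hx⟩ := hf y
  have : a * φ y = 0 := by
    rw [← smul_eq_mul, ← map_smul, ← hx]
    exact LinearMap.congr_fun hφ x
  simpa [ha] using this

theorem of_span_eq_top {f : M →ₗ[A] N} {s : Set N} (hs : Submodule.span A s = ⊤)
    (h : ∀ y ∈ s, ∃ a : A, a ≠ 0 ∧ a • y ∈ range f) : f.HasTorsionCokernel := by
  intro y
  induction hs ▸ Submodule.mem_top (x := y) using Submodule.span_induction with
  | mem y hy => exact h y hy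
  | zero => exact ⟨1, one_ne_zero, by simp⟩
  | add y z _ _ hy hz =>
    obtain ⟨a, ha, hy⟩ := hy
    obtain ⟨b, hb, hz⟩ := hz
    refine ⟨a * b, mul_ne_zero ha hb, ?_⟩
    have := add_mem (Submodule.smul_mem _ b hy) (Submodule.smul_mem _ a hz)
    rwa [smul_smul, smul_smul, mul_comm b a, ← smul_add] at this
  | smul r y _ hy =>
    obtain ⟨a, ha, hy⟩ := hy
    exact ⟨a, ha, smul_comm a r y ▸ Submodule.smul_mem _ r hy⟩

theorem tensorProductMap {f : M →ₗ[A] N} {g : P →ₗ[A] Q} (hf : f.HasTorsionCokernel)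
    (hg : g.HasTorsionCokernel) : (TensorProduct.map f g).HasTorsionCokernel := by
  refine of_span_eq_top (TensorProduct.span_tmul_eq_top A N Q) ?_
  rintro _ ⟨y, z, rfl⟩
  obtain ⟨a, ha, x, hx⟩ := hf y
  obtain ⟨b, hb, w, hw⟩ := hg z
  exact ⟨a * b, mul_ne_zero ha hb, x ⊗ₜ w, by
    rw [TensorProduct.map_tmul, hx, hw, TensorProduct.smul_tmul_smul]⟩

theorem bijective_dualMap_eval (h : (Dual.eval A M).HasTorsionCokernel) :
    Function.Bijective (Dual.eval A M).dualMap :=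
  ⟨h.injective_dualMap, fun f => ⟨Dual.eval A (Dual A M) f, rfl⟩⟩

theorem isReflexive_dual (h : (Dual.eval A M).HasTorsionCokernel) : IsReflexive A (Dual A M) :=
  ⟨(Function.Bijective.of_comp_iff' h.bijective_dualMap_eval _).mp Function.bijective_id⟩

end LinearMap.HasTorsionCokernel

variable (A) in
def SpansGenerically (x₀ : M) : Prop :=
  (LinearMap.toSpanSingleton A M x₀).HasTorsionCokernel

namespace SpansGenerically

variable {x₀ : M}

theorem map (h : SpansGenerically A x₀) {g : M →ₗ[A] N} (hg : Function.Surjective g) :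
    SpansGenerically A (g x₀) := by
  rw [SpansGenerically, ← LinearMap.comp_toSpanSingleton]
  exact h.comp_of_surjective hg

variable [IsDomain A]

theorem tprod {ι : Type*} [Fintype ι] {M : ι → Type*} [∀ i, AddCommMonoid (M i)]
    [∀ i, Module A (M i)] {x₀ : ∀ i, M i} (h : ∀ i, SpansGenerically A (x₀ i)) :
    SpansGenerically A (PiTensorProduct.tprod A x₀) := by
  refine LinearMap.HasTorsionCokernel.of_span_eq_top PiTensorProduct.span_tprod_eq_top ?_
  rintro _ ⟨x, rfl⟩
  choose a ha p hp using fun i => h i (x i)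
  refine ⟨∏ i, a i, Finset.prod_ne_zero_iff.mpr fun i _ => ha i, ∏ i, p i, ?_⟩
  simp only [LinearMap.toSpanSingleton_apply] at hp ⊢
  rw [← MultilinearMap.map_smul_univ, ← MultilinearMap.map_smul_univ, funext hp]

theorem apply_smul_eq_apply_smul (h : SpansGenerically A x₀) (f g : Dual A M) :
    f x₀ • g = g x₀ • f := by
  ext x
  obtain ⟨a, ha, p, hp⟩ := h x
  simp only [LinearMap.toSpanSingleton_apply] at hp
  have hf : a * f x = p * f x₀ := by simp only [← smul_eq_mul, ← map_smul, hp]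
  have hg : a * g x = p * g x₀ := by simp only [← smul_eq_mul, ← map_smul, hp]
  apply mul_left_cancel₀ ha
  simp only [LinearMap.smul_apply, smul_eq_mul]
  linear_combination f x₀ * hg - g x₀ * hf

theorem eq_zero_of_apply_eq_zero (h : SpansGenerically A x₀) {f : Dual A M} (hf : f x₀ = 0) :
    f = 0 := by
  ext x
  obtain ⟨a, ha, p, hp⟩ := h x
  have : a * f x = 0 := by
    rw [← smul_eq_mul, ← map_smul, ← hp, LinearMap.toSpanSingleton_apply, map_smul, hf, smul_zero]
  simpa [ha] using this

theorem hasTorsionCokernel_eval (h : SpansGenerically A x₀) :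
    (Dual.eval A M).HasTorsionCokernel := by
  intro F
  by_cases hvan : ∀ f : Dual A M, f x₀ = 0
  · refine ⟨1, one_ne_zero, 0, ?_⟩
    ext f
    simp [h.eq_zero_of_apply_eq_zero (hvan f)]
  push Not at hvan
  obtain ⟨f₀, hf₀⟩ := hvan
  refine ⟨f₀ x₀, hf₀, F f₀ • x₀, ?_⟩
  ext f
  simpa [mul_comm] using congrArg F (h.apply_smul_eq_apply_smul f f₀)

end SpansGenerically

theorem exists_spansGenerically_of_finrank_eq_one [IsDomain A] {M : Type*} [AddCommGroup M]
    [Module A M] [NoZeroSMulDivisors A M]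
    (K : Type*) [Field K] [Algebra A K] [IsFractionRing A K]
    (h : finrank K (K ⊗[A] M) = 1) : ∃ x₀ : M, SpansGenerically A x₀ := by
  have hrank : Module.rank A M = 1 := by
    rwa [rank_eq_one_iff_finrank_eq_one,
      ← IsLocalizedModule.finrank_eq (nonZeroDivisors A) (TensorProduct.mk A K M 1) le_rfl,
      ← IsFractionRing.finrank_right_eq A (K ⊗[A] M) (S := K)]
  obtain ⟨x₀, hx₀⟩ := rank_pos_iff_exists_ne_zero.mp (hrank ▸ zero_lt_one)
  refine ⟨x₀, fun x => ?_⟩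
  have hdep : ¬LinearIndependent A ![x₀, x] := fun hli => by
    simpa [hrank] using hli.cardinal_lift_le_rank
  obtain ⟨s, a, hsa, hne⟩ : ∃ s a : A, s • x₀ + a • x = 0 ∧ (s = 0 → a ≠ 0) := by
    simpa [LinearIndependent.pair_iff] using hdep
  have ha : a ≠ 0 := by
    rintro rfl
    exact hne (by simpa [hx₀] using hsa) rfl
  refine ⟨a, ha, -s, ?_⟩
  rw [LinearMap.toSpanSingleton_apply, neg_smul, neg_eq_iff_add_eq_zero, hsa]

theorem doubleDualTensor_comp_map_eval (X Y : Type*) [AddCommGroup X] [Module A X]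
    [AddCommGroup Y] [Module A Y] :
    doubleDualTensor A X Y ∘ₗ TensorProduct.map (Dual.eval A X) (Dual.eval A Y) =
      Dual.eval A (X ⊗[A] Y) :=
  TensorProduct.ext' fun _ _ => rfl

theorem bijective_dualMap_doubleDualTensor [IsDomain A] {X Y : Type*} [AddCommGroup X]
    [Module A X] [AddCommGroup Y] [Module A Y] (hX : (Dual.eval A X).HasTorsionCokernel)
    (hY : (Dual.eval A Y).HasTorsionCokernel) (hXY : (Dual.eval A (X ⊗[A] Y)).HasTorsionCokernel) :
    Function.Bijective (doubleDualTensor A X Y).dualMap := by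
  have hcomp : (TensorProduct.map (Dual.eval A X) (Dual.eval A Y)).dualMap ∘
      (doubleDualTensor A X Y).dualMap = (Dual.eval A (X ⊗[A] Y)).dualMap := by
    rw [← LinearMap.coe_comp, LinearMap.dualMap_comp_dualMap, doubleDualTensor_comp_map_eval]
  exact (hcomp ▸ hXY.bijective_dualMap_eval).of_comp_left
    (hX.tensorProductMap hY).injective_dualMap

theorem exists_linearEquiv_comp_eval_eq [IsReflexive A Q] (F : P →ₗ[A] Q)
    (hF : Function.Bijective F.dualMap) :
    ∃ e : Dual A (Dual A P) ≃ₗ[A] Q, (e : Dual A (Dual A P) →ₗ[A] Q) ∘ₗ Dual.eval A P = F := by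
  refine ⟨(LinearEquiv.ofBijective _ hF).dualMap.trans (evalEquiv A Q).symm, ?_⟩
  ext x
  exact (evalEquiv A Q).symm_apply_eq.mpr rfl

end

theorem stmt_6_general (A K B : Type*) [CommRing A] [IsDomain A]
    [Field K] [Algebra A K] [IsFractionRing A K]
    [AddCommGroup B] [Module A B] [NoZeroSMulDivisors A B]
    (hrank : Module.finrank K (K ⊗[A] B) = 1) (n m : ℕ) :
    ∃ e : Module.Dual A (Module.Dual A
        ((Module.Dual A (Module.Dual A (⨂[A]^n B))) ⊗[A]
          (Module.Dual A (Module.Dual A (⨂[A]^m B))))) ≃ₗ[A]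
        Module.Dual A (Module.Dual A (⨂[A]^(n + m) B)),
      (e : _ →ₗ[A] _) ∘ₗ
          Module.Dual.eval A ((Module.Dual A (Module.Dual A (⨂[A]^n B))) ⊗[A]
            (Module.Dual A (Module.Dual A (⨂[A]^m B)))) =
        ((TensorPower.mulEquiv (R := A) (M := B) (n := n) (m := m)).dualMap.dualMap
            : Module.Dual A (Module.Dual A ((⨂[A]^n B) ⊗[A] (⨂[A]^m B))) ≃ₗ[A]
              Module.Dual A (Module.Dual A (⨂[A]^(n + m) B))).toLinearMap ∘ₗ
          doubleDualTensor A (⨂[A]^n B) (⨂[A]^m B) := by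
  obtain ⟨b₀, hb₀⟩ := exists_spansGenerically_of_finrank_eq_one K hrank
  have hpow (k : ℕ) : SpansGenerically A (PiTensorProduct.tprod A fun _ : Fin k => b₀) :=
    .tprod fun _ => hb₀
  let e₀ := TensorPower.mulEquiv (R := A) (M := B) (n := n) (m := m)
  have : IsReflexive A (Dual A (⨂[A]^(n + m) B)) :=
    (hpow (n + m)).hasTorsionCokernel_eval.isReflexive_dual
  refine exists_linearEquiv_comp_eval_eq
    (e₀.dualMap.dualMap.toLinearMap ∘ₗ doubleDualTensor A _ _) ?_
  rw [← LinearMap.dualMap_comp_dualMap]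
  exact (bijective_dualMap_doubleDualTensor (hpow n).hasTorsionCokernel_eval
    (hpow m).hasTorsionCokernel_eval
    ((hpow (n + m)).map e₀.symm.surjective).hasTorsionCokernel_eval).comp
    e₀.dualMap.dualMap.dualMap.bijective

/-- Let `A` be a Noetherian integrally closed domain with fraction field `K`,
and let `B` be a finitely generated torsion-free `A`-module of rank `1`.  With
`B^{[n]} := (B^{⊗n})^∨∨`, for all `m, n ≥ 0` the natural map
`B^{[n]} ⊗_A B^{[m]} → B^{[n+m]}` (induced by double dualization from
`B^{⊗n} ⊗ B^{⊗m} = B^{⊗(n+m)}`) induces an isomorphism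
`(B^{[n]} ⊗_A B^{[m]})^∨∨ ≅ B^{[n+m]}`. -/
theorem stmt_6 (A K B : Type*) [CommRing A] [IsDomain A] [IsNoetherianRing A]
    [IsIntegrallyClosed A] [Field K] [Algebra A K] [IsFractionRing A K]
    [AddCommGroup B] [Module A B] [Module.Finite A B] [NoZeroSMulDivisors A B]
    (hrank : Module.finrank K (K ⊗[A] B) = 1) (n m : ℕ) :
    ∃ e : Module.Dual A (Module.Dual A
        ((Module.Dual A (Module.Dual A (⨂[A]^n B))) ⊗[A]
          (Module.Dual A (Module.Dual A (⨂[A]^m B))))) ≃ₗ[A]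
        Module.Dual A (Module.Dual A (⨂[A]^(n + m) B)),
      (e : _ →ₗ[A] _) ∘ₗ
          Module.Dual.eval A ((Module.Dual A (Module.Dual A (⨂[A]^n B))) ⊗[A]
            (Module.Dual A (Module.Dual A (⨂[A]^m B)))) =
        ((TensorPower.mulEquiv (R := A) (M := B) (n := n) (m := m)).dualMap.dualMap
            : Module.Dual A (Module.Dual A ((⨂[A]^n B) ⊗[A] (⨂[A]^m B))) ≃ₗ[A]
              Module.Dual A (Module.Dual A (⨂[A]^(n + m) B))).toLinearMap ∘ₗ
          doubleDualTensor A (⨂[A]^n B) (⨂[A]^m B) :=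
  stmt_6_general A K B hrank n m
end

section
/- Let A be a Noetherian integrally closed domain, M a finitely generated A-module, and P a finitely generated reflexive A-module. Then precomposition with the evaluation map η : M → M^∨∨ gives a bijection Hom_A(M^∨∨, P) → Hom_A(M, P); that is, every A-linear map from M to P extends uniquely to the reflexive hull M^∨∨. -/
set_option maxHeartbeats 1000000


open TensorProduct Module

section aux
variable (A M : Type*) [CommRing A] [IsDomain A] [IsNoetherianRing A]
    [AddCommGroup M] [Module A M] [Module.Finite A M]

lemma aux_torsion (z : Dual A (Dual A M)) :
    ∃ a : A, a ≠ 0 ∧ a • z ∈ LinearMap.range (Dual.eval A M) := by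
  classical
  set S := nonZeroDivisors A with hS
  let K := FractionRing A
  let M' := LocalizedModule S M
  let f := LocalizedModule.mkLinearMap S M
  let g := Algebra.linearMap A K
  haveI : Module.FinitePresentation A M := (Module.finitePresentation_iff_finite A M).mpr ‹_›
  haveI : Module.FinitePresentation A (Dual A M) :=
    (Module.finitePresentation_iff_finite A (Dual A M)).mpr inferInstance
  let D : Dual A M →ₗ[A] (M' →ₗ[K] K) := IsLocalizedModule.mapExtendScalars S f g K
  haveI : IsLocalizedModule S D := inferInstance
  let D2 : Dual A (Dual A M) →ₗ[A] ((M' →ₗ[K] K) →ₗ[K] K) :=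
    IsLocalizedModule.mapExtendScalars S D g K
  haveI : IsLocalizedModule S D2 := inferInstance
  haveI : Module.Finite K M' := by
    have : Module.FinitePresentation (Localization S) (LocalizedModule S M) := inferInstance
    exact inferInstance
  haveI : IsReflexive K M' := inferInstance
  have hD2 : ∀ (h : Dual A (Dual A M)) (φ : Dual A M), D2 h (D φ) = algebraMap A K (h φ) :=
    fun h φ => LinearMap.congr_fun (IsLocalizedModule.map_comp S D g h) φ
  have hD : ∀ (φ : Dual A M) (m : M), D φ (f m) = algebraMap A K (φ m) :=
    fun φ m => LinearMap.congr_fun (IsLocalizedModule.map_comp S f g φ) m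
  obtain ⟨x, hx⟩ := (bijective_dual_eval K M').surjective (D2 z)
  obtain ⟨⟨m, s⟩, hms⟩ := IsLocalizedModule.surj S f x
  have hms' : (s : A) • x = f m := by rw [← Submonoid.smul_def]; exact hms
  have hcancel : ∀ (t : S) (c₁ c₂ : K), (t : A) • c₁ = (t : A) • c₂ → c₁ = c₂ := by
    intro t c₁ c₂ h
    rw [Algebra.smul_def, Algebra.smul_def] at h
    have htne : algebraMap A K (t : A) ≠ 0 := fun e =>
      mem_nonZeroDivisors_iff_ne_zero.mp t.2
        (IsFractionRing.injective A K (by rw [e, map_zero]))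
    exact mul_left_cancel₀ htne h
  have key : D2 ((Dual.eval A M) m) = Dual.eval K M' (f m) := by
    apply LinearMap.ext; intro ψ
    obtain ⟨⟨φ, t⟩, ht⟩ := IsLocalizedModule.surj S D ψ
    have ht' : (t : A) • ψ = D φ := by rw [← Submonoid.smul_def]; exact ht
    refine hcancel t _ _ ?_
    have h1 : (t : A) • (D2 ((Dual.eval A M) m) ψ) = D2 ((Dual.eval A M) m) (D φ) := by
      rw [← LinearMap.map_smul_of_tower, ht']
    have h2 : (t : A) • (Dual.eval K M' (f m) ψ) = Dual.eval K M' (f m) (D φ) := by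
      rw [← LinearMap.map_smul_of_tower, ht']
    rw [h1, h2, hD2]
    exact (hD φ m).symm
  have hzero : D2 ((s : A) • z - (Dual.eval A M) m) = 0 := by
    rw [map_sub, map_smul, ← hx, ← LinearMap.map_smul_of_tower, hms', key, sub_self]
  obtain ⟨t, ht⟩ := (IsLocalizedModule.eq_zero_iff S D2).mp hzero
  have ht' : (t : A) • ((s : A) • z - (Dual.eval A M) m) = 0 := by
    rw [← Submonoid.smul_def]; exact ht
  refine ⟨(t : A) * (s : A), ?_, ⟨(t : A) • m, ?_⟩⟩
  · exact mul_ne_zero (mem_nonZeroDivisors_iff_ne_zero.mp t.2)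
      (mem_nonZeroDivisors_iff_ne_zero.mp s.2)
  · rw [smul_sub, sub_eq_zero] at ht'
    rw [map_smul, ← ht', smul_smul]

end aux



/-- Let `A` be a Noetherian integrally closed domain, `M` a finitely generated
`A`-module, and `P` a finitely generated reflexive `A`-module.  Then precomposition with the
evaluation map `η : M → M^∨∨` gives a bijection `Hom_A(M^∨∨, P) → Hom_A(M, P)`: every `A`-linear
map from `M` to `P` extends uniquely to the reflexive hull `M^∨∨`. -/
theorem stmt_8 (A M P : Type*) [CommRing A] [IsDomain A] [IsNoetherianRing A]
    [IsIntegrallyClosed A] [AddCommGroup M] [Module A M] [Module.Finite A M]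
    [AddCommGroup P] [Module A P] [Module.Finite A P] [Module.IsReflexive A P] :
    Function.Bijective (fun g : Module.Dual A (Module.Dual A M) →ₗ[A] P =>
      g ∘ₗ Module.Dual.eval A M) := by
  have hP : ∀ (a : A) (p : P), a ≠ 0 → a • p = 0 → p = 0 := by
    intro a p ha hap
    have h0 : Dual.eval A P p = 0 := by
      ext φ
      have h1 : a • (Dual.eval A P p) φ = 0 := by
        rw [← LinearMap.smul_apply, ← map_smul, hap, map_zero, LinearMap.zero_apply]
      have h2 := (smul_eq_zero.mp h1).resolve_left ha
      simpa using h2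
    exact (bijective_dual_eval A P).injective (h0.trans (map_zero _).symm)
  constructor
  · intro g₁ g₂ h
    simp only [] at h
    ext z
    obtain ⟨a, ha, m, hm⟩ := aux_torsion A M z
    have h1 : g₁ (a • z) = g₂ (a • z) := by
      rw [← hm]; exact LinearMap.congr_fun h m
    rw [map_smul, map_smul] at h1
    have h2 : a • (g₁ z - g₂ z) = 0 := by rw [smul_sub, h1, sub_self]
    exact sub_eq_zero.mp (hP a _ ha h2)
  · intro f0
    refine ⟨(evalEquiv A P).symm.toLinearMap ∘ₗ f0.dualMap.dualMap, ?_⟩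
    show ((evalEquiv A P).symm.toLinearMap ∘ₗ f0.dualMap.dualMap) ∘ₗ Dual.eval A M = f0
    rw [LinearMap.comp_assoc, Module.Dual.eval_naturality]
    ext m
    rw [LinearMap.comp_apply, LinearEquiv.coe_coe, LinearMap.comp_apply, ← evalEquiv_apply,
      LinearEquiv.symm_apply_apply]
end
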